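/- arXiv:1903.08634 — 3 statements merged into one kernel-verified Lean document; each statement's English description precedes it below -/
import Mathlib

section
/- Suppose symmetric matrices P (n×n), and matrices A (n×n), B (n×m), K (m×p), C (p×n) satisfy the Lyapunov equation (A-BKC)^T P + P(A-BKC) + R̂(K) = 0, where R̂(K) = R1 - R12 K C - (R12 K C)^T + (KC)^T R2 (KC). Then λ_min(R2)·σ_min(C)²·‖K‖₂² ≤ 2(‖A‖₂ + ‖B‖₂‖K‖₂‖C‖₂)·‖P‖₂ + ‖R1‖₂ + 2‖R12‖₂‖K‖₂‖C‖₂, where σ_min(C) is the minimal singular value of C and λ_min(R2) the minimal eigenvalue of R2. -/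
open Matrix

noncomputable def l2opNorm {m n : ℕ} (A : Matrix (Fin m) (Fin n) ℝ) : ℝ :=
  ‖LinearMap.toContinuousLinearMap (Matrix.toEuclideanLin A)‖

open scoped Matrix.Norms.L2Operator

lemma l2opNorm_eq_norm {a b : ℕ} (A : Matrix (Fin a) (Fin b) ℝ) : l2opNorm A = ‖A‖ := rfl

lemma norm_transpose' {a b : ℕ} (A : Matrix (Fin a) (Fin b) ℝ) : ‖Aᵀ‖ = ‖A‖ := by
  rw [← conjTranspose_eq_transpose_of_trivial, Matrix.l2_opNorm_conjTranspose]

/-- Rayleigh-type lower bound: the smallest eigenvalue bounds the quadratic form below. -/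
lemma rayleigh_low {q : ℕ} {H : Matrix (Fin q) (Fin q) ℝ} (hH : H.IsHermitian) (x : Fin q → ℝ) :
    (⨅ i, hH.eigenvalues i) * (x ⬝ᵥ x) ≤ x ⬝ᵥ (H *ᵥ x) := by
  classical
  set η := ⨅ i, hH.eigenvalues i with hηdef
  have hps : (H - η • 1).PosSemidef := by
    have h1 : H - η • 1 = (hH.eigenvectorUnitary : Matrix (Fin q) (Fin q) ℝ) *
        diagonal (fun i => hH.eigenvalues i - η) *
        ((hH.eigenvectorUnitary : Matrix (Fin q) (Fin q) ℝ))ᴴ := by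
      have hU : (hH.eigenvectorUnitary : Matrix (Fin q) (Fin q) ℝ) *
          ((hH.eigenvectorUnitary : Matrix (Fin q) (Fin q) ℝ))ᴴ = 1 := by
        rw [← Matrix.star_eq_conjTranspose]
        exact (Matrix.mem_unitaryGroup_iff).mp hH.eigenvectorUnitary.2
      have hone : (η • (1 : Matrix (Fin q) (Fin q) ℝ)) = diagonal (fun _ => η) := by
        ext i j
        by_cases h : i = j <;>
          simp [Matrix.diagonal_apply, Matrix.one_apply, Matrix.smul_apply, h]
      have hd : (diagonal (fun i => hH.eigenvalues i - η) : Matrix (Fin q) (Fin q) ℝ)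
          = diagonal (RCLike.ofReal ∘ hH.eigenvalues) - η • 1 := by
        rw [hone, ← Matrix.diagonal_sub]
        congr 1
      rw [hd, Matrix.mul_sub, Matrix.sub_mul]
      rw [Matrix.mul_smul, Matrix.mul_one, Matrix.smul_mul, hU]
      rw [← Matrix.star_eq_conjTranspose, ← Unitary.conjStarAlgAut_apply (S := ℝ), ← hH.spectral_theorem]
    rw [h1]
    refine PosSemidef.mul_mul_conjTranspose_same ?_ _
    refine Matrix.posSemidef_diagonal_iff.mpr fun i => sub_nonneg.mpr ?_
    exact ciInf_le (Finite.bddBelow_range _) i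
  have h2 := hps.dotProduct_mulVec_nonneg x
  have hsx : star x = x := by simp
  rw [hsx, Matrix.sub_mulVec, Matrix.smul_mulVec, Matrix.one_mulVec,
    dotProduct_sub, dotProduct_smul, smul_eq_mul] at h2
  linarith

lemma norm_symm_sq {a : ℕ} (v : Fin a → ℝ) :
    ‖(WithLp.equiv 2 (Fin a → ℝ)).symm v‖ ^ 2 = v ⬝ᵥ v := by
  rw [← real_inner_self_eq_norm_sq]
  exact (EuclideanSpace.inner_toLp_toLp v v).trans (by simp)

lemma dot_nonneg' {a : ℕ} (v : Fin a → ℝ) : 0 ≤ v ⬝ᵥ v :=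
  Finset.sum_nonneg fun i _ => mul_self_nonneg _

lemma mulVec_norm_le {a b : ℕ} (N : Matrix (Fin a) (Fin b) ℝ) (y : Fin b → ℝ) :
    ‖(WithLp.equiv 2 (Fin a → ℝ)).symm (N *ᵥ y)‖ ≤
      ‖N‖ * ‖(WithLp.equiv 2 (Fin b → ℝ)).symm y‖ :=
  Matrix.l2_opNorm_mulVec N ((WithLp.equiv 2 (Fin b → ℝ)).symm y)

lemma mulVec_dot_self_le {a b : ℕ} (N : Matrix (Fin a) (Fin b) ℝ) (y : Fin b → ℝ) :
    (N *ᵥ y) ⬝ᵥ (N *ᵥ y) ≤ ‖N‖ ^ 2 * (y ⬝ᵥ y) := by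
  have h := mulVec_norm_le N y
  have h1 := norm_symm_sq (N *ᵥ y)
  have h2 := norm_symm_sq y
  nlinarith [norm_nonneg ((WithLp.equiv 2 (Fin a → ℝ)).symm (N *ᵥ y)),
    norm_nonneg ((WithLp.equiv 2 (Fin b → ℝ)).symm y), norm_nonneg N]

/-- quadratic form bounded by the operator norm -/
lemma quad_le_opNorm {a : ℕ} (M : Matrix (Fin a) (Fin a) ℝ) (v : Fin a → ℝ) :
    v ⬝ᵥ (M *ᵥ v) ≤ ‖M‖ * (v ⬝ᵥ v) := by
  have h1 : v ⬝ᵥ (M *ᵥ v) = inner ℝ ((WithLp.equiv 2 (Fin a → ℝ)).symm v)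
      ((WithLp.equiv 2 (Fin a → ℝ)).symm (M *ᵥ v)) := by
    refine Eq.trans ?_ (EuclideanSpace.inner_toLp_toLp v (M *ᵥ v)).symm; simp [dotProduct_comm]
  have h2 := real_inner_le_norm ((WithLp.equiv 2 (Fin a → ℝ)).symm v)
      ((WithLp.equiv 2 (Fin a → ℝ)).symm (M *ᵥ v))
  have h3 := mulVec_norm_le M v
  have h4 := norm_symm_sq v
  calc v ⬝ᵥ (M *ᵥ v)
      ≤ ‖(WithLp.equiv 2 (Fin a → ℝ)).symm v‖ *
        ‖(WithLp.equiv 2 (Fin a → ℝ)).symm (M *ᵥ v)‖ := h1 ▸ h2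
    _ ≤ ‖(WithLp.equiv 2 (Fin a → ℝ)).symm v‖ *
        (‖M‖ * ‖(WithLp.equiv 2 (Fin a → ℝ)).symm v‖) :=
        mul_le_mul_of_nonneg_left h3 (norm_nonneg _)
    _ = ‖M‖ * (v ⬝ᵥ v) := by rw [← h4]; ring

/-- From a pointwise quadratic bound to a bound on the squared operator norm. -/
lemma opNorm_sq_le {a b : ℕ} (M : Matrix (Fin a) (Fin b) ℝ) {η c : ℝ} (hη : 0 < η) (hc : 0 ≤ c)
    (h : ∀ v : Fin b → ℝ, η * ((M *ᵥ v) ⬝ᵥ (M *ᵥ v)) ≤ c * (v ⬝ᵥ v)) :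
    η * ‖M‖ ^ 2 ≤ c := by
  have hb : ‖M‖ ≤ Real.sqrt (c / η) := by
    rw [Matrix.l2_opNorm_def]
    refine ContinuousLinearMap.opNorm_le_bound _ (Real.sqrt_nonneg _) fun x => ?_
    set v : Fin b → ℝ := WithLp.equiv 2 (Fin b → ℝ) x with hv
    have hx : x = (WithLp.equiv 2 (Fin b → ℝ)).symm v := rfl
    have hTx : ‖(Matrix.toEuclideanLin.trans LinearMap.toContinuousLinearMap M) x‖
        = ‖(WithLp.equiv 2 (Fin a → ℝ)).symm (M *ᵥ v)‖ := rfl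
    have hnx : ‖x‖ = ‖(WithLp.equiv 2 (Fin b → ℝ)).symm v‖ := rfl
    rw [hTx, hnx]
    have h1 := norm_symm_sq (M *ᵥ v)
    have h2 := norm_symm_sq v
    have h3 := h v
    have key : ‖(WithLp.equiv 2 (Fin a → ℝ)).symm (M *ᵥ v)‖ ^ 2
        ≤ (Real.sqrt (c / η) * ‖(WithLp.equiv 2 (Fin b → ℝ)).symm v‖) ^ 2 := by
      rw [mul_pow, Real.sq_sqrt (div_nonneg hc hη.le)]
      rw [h1, h2]
      rw [div_mul_eq_mul_div, le_div_iff₀ hη]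
      nlinarith
    have := Real.sqrt_le_sqrt key
    rwa [Real.sqrt_sq (norm_nonneg _), Real.sqrt_sq (by positivity)] at this
  have hM2 : ‖M‖ ^ 2 ≤ c / η := by
    have := Real.sq_sqrt (div_nonneg hc hη.le)
    nlinarith [norm_nonneg M, Real.sqrt_nonneg (c / η)]
  calc η * ‖M‖ ^ 2 ≤ η * (c / η) := by nlinarith
    _ = c := by field_simp

lemma mulVec_dot {a b : ℕ} (N : Matrix (Fin a) (Fin b) ℝ) (x : Fin b → ℝ) (w : Fin a → ℝ) :
    (N *ᵥ x) ⬝ᵥ w = x ⬝ᵥ (Nᵀ *ᵥ w) := by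
  rw [Matrix.dotProduct_mulVec, Matrix.vecMul_transpose]

theorem stmt_5 {n m p : ℕ}
    (A : Matrix (Fin n) (Fin n) ℝ) (B : Matrix (Fin n) (Fin m) ℝ)
    (C : Matrix (Fin p) (Fin n) ℝ) (K : Matrix (Fin m) (Fin p) ℝ)
    (P : Matrix (Fin n) (Fin n) ℝ)
    (R1 : Matrix (Fin n) (Fin n) ℝ) (R12 : Matrix (Fin n) (Fin m) ℝ)
    (R2 : Matrix (Fin m) (Fin m) ℝ)
    (hP : P.IsHermitian) (hR2 : R2.PosDef) (hC : C.rank = p)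
    (hCC : (C * Cᵀ).IsHermitian)
    (hLyap : (A - B * K * C)ᵀ * P + P * (A - B * K * C) +
      (R1 - R12 * K * C - (R12 * K * C)ᵀ + (K * C)ᵀ * R2 * (K * C)) = 0) :
    (⨅ i, hR2.1.eigenvalues i) * Real.sqrt (⨅ i, hCC.eigenvalues i) ^ 2 * l2opNorm K ^ 2 ≤
      2 * (l2opNorm A + l2opNorm B * l2opNorm K * l2opNorm C) * l2opNorm P
        + l2opNorm R1 + 2 * l2opNorm R12 * l2opNorm K * l2opNorm C := by
  simp only [l2opNorm_eq_norm]
  set lam := ⨅ i, hR2.1.eigenvalues i with hlam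
  set mu := ⨅ i, hCC.eigenvalues i with hmu
  have hRHS : (0:ℝ) ≤ 2 * (‖A‖ + ‖B‖ * ‖K‖ * ‖C‖) * ‖P‖ + ‖R1‖ + 2 * ‖R12‖ * ‖K‖ * ‖C‖ := by
    positivity
  rcases le_or_gt lam 0 with hl | hl
  · have h0 : lam * Real.sqrt mu ^ 2 * ‖K‖ ^ 2 ≤ 0 := by
      have := mul_nonpos_of_nonpos_of_nonneg hl (sq_nonneg (Real.sqrt mu))
      exact mul_nonpos_of_nonpos_of_nonneg this (sq_nonneg _)
    linarith
  rcases le_or_gt mu 0 with hm | hm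
  · rw [Real.sqrt_eq_zero_of_nonpos hm]
    have h0 : lam * (0:ℝ) ^ 2 * ‖K‖ ^ 2 = 0 := by ring
    linarith
  -- main case
  have hsq : Real.sqrt mu ^ 2 = mu := Real.sq_sqrt hm.le
  rw [hsq]
  set M := (K * C)ᵀ * R2 * (K * C) with hMdef
  -- Step 1: ‖M‖ ≤ RHS
  have hM : M = -((A - B * K * C)ᵀ * P) - P * (A - B * K * C) - R1 + R12 * K * C
      + (R12 * K * C)ᵀ := by
    have h : ((A - B * K * C)ᵀ * P + P * (A - B * K * C) + R1 - R12 * K * C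
        - (R12 * K * C)ᵀ) + M = 0 := by rw [← hLyap]; abel
    rw [eq_neg_of_add_eq_zero_right h]; abel
  have hBKC : ‖B * K * C‖ ≤ ‖B‖ * ‖K‖ * ‖C‖ := by
    calc ‖B * K * C‖ ≤ ‖B * K‖ * ‖C‖ := Matrix.l2_opNorm_mul _ _
      _ ≤ ‖B‖ * ‖K‖ * ‖C‖ :=
        mul_le_mul_of_nonneg_right (Matrix.l2_opNorm_mul _ _) (norm_nonneg _)
  have hABK : ‖A - B * K * C‖ ≤ ‖A‖ + ‖B‖ * ‖K‖ * ‖C‖ :=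
    (norm_sub_le _ _).trans (by linarith)
  have hR12KC : ‖R12 * K * C‖ ≤ ‖R12‖ * ‖K‖ * ‖C‖ := by
    calc ‖R12 * K * C‖ ≤ ‖R12 * K‖ * ‖C‖ := Matrix.l2_opNorm_mul _ _
      _ ≤ ‖R12‖ * ‖K‖ * ‖C‖ :=
        mul_le_mul_of_nonneg_right (Matrix.l2_opNorm_mul _ _) (norm_nonneg _)
  have h1 : ‖M‖ ≤ 2 * (‖A‖ + ‖B‖ * ‖K‖ * ‖C‖) * ‖P‖ + ‖R1‖ + 2 * ‖R12‖ * ‖K‖ * ‖C‖ := by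
    rw [hM]
    have t1 : ‖(A - B * K * C)ᵀ * P‖ ≤ (‖A‖ + ‖B‖ * ‖K‖ * ‖C‖) * ‖P‖ := by
      calc ‖(A - B * K * C)ᵀ * P‖ ≤ ‖(A - B * K * C)ᵀ‖ * ‖P‖ := Matrix.l2_opNorm_mul _ _
        _ ≤ (‖A‖ + ‖B‖ * ‖K‖ * ‖C‖) * ‖P‖ := by
          rw [norm_transpose']
          exact mul_le_mul_of_nonneg_right hABK (norm_nonneg _)
    have t2 : ‖P * (A - B * K * C)‖ ≤ ‖P‖ * (‖A‖ + ‖B‖ * ‖K‖ * ‖C‖) := by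
      calc ‖P * (A - B * K * C)‖ ≤ ‖P‖ * ‖A - B * K * C‖ := Matrix.l2_opNorm_mul _ _
        _ ≤ ‖P‖ * (‖A‖ + ‖B‖ * ‖K‖ * ‖C‖) :=
          mul_le_mul_of_nonneg_left hABK (norm_nonneg _)
    have t3 : ‖(R12 * K * C)ᵀ‖ ≤ ‖R12‖ * ‖K‖ * ‖C‖ := by rw [norm_transpose']; exact hR12KC
    have tri : ‖-((A - B * K * C)ᵀ * P) - P * (A - B * K * C) - R1 + R12 * K * C
        + (R12 * K * C)ᵀ‖ ≤ ‖(A - B * K * C)ᵀ * P‖ + ‖P * (A - B * K * C)‖ + ‖R1‖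
        + ‖R12 * K * C‖ + ‖(R12 * K * C)ᵀ‖ := by
      calc ‖-((A - B * K * C)ᵀ * P) - P * (A - B * K * C) - R1 + R12 * K * C
          + (R12 * K * C)ᵀ‖
          ≤ ‖-((A - B * K * C)ᵀ * P) - P * (A - B * K * C) - R1 + R12 * K * C‖
            + ‖(R12 * K * C)ᵀ‖ := norm_add_le _ _
        _ ≤ ‖-((A - B * K * C)ᵀ * P) - P * (A - B * K * C) - R1‖ + ‖R12 * K * C‖
            + ‖(R12 * K * C)ᵀ‖ := by gcongr; exact norm_add_le _ _
        _ ≤ ‖-((A - B * K * C)ᵀ * P) - P * (A - B * K * C)‖ + ‖R1‖ + ‖R12 * K * C‖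
            + ‖(R12 * K * C)ᵀ‖ := by gcongr ?_ + _ + _; exact norm_sub_le _ _
        _ ≤ ‖-((A - B * K * C)ᵀ * P)‖ + ‖P * (A - B * K * C)‖ + ‖R1‖ + ‖R12 * K * C‖
            + ‖(R12 * K * C)ᵀ‖ := by gcongr ?_ + _ + _ + _; exact norm_sub_le _ _
        _ = ‖(A - B * K * C)ᵀ * P‖ + ‖P * (A - B * K * C)‖ + ‖R1‖ + ‖R12 * K * C‖
            + ‖(R12 * K * C)ᵀ‖ := by rw [norm_neg]
    linarith
  -- Step 2a: mu * ‖K‖^2 ≤ ‖K * C‖^2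
  have h2a : mu * ‖K‖ ^ 2 ≤ ‖K * C‖ ^ 2 := by
    have := opNorm_sq_le Kᵀ hm (sq_nonneg ‖K * C‖) (fun y => ?_)
    · rwa [norm_transpose'] at this
    have hr := rayleigh_low hCC (Kᵀ *ᵥ y)
    have heq : ((K * C)ᵀ *ᵥ y) ⬝ᵥ ((K * C)ᵀ *ᵥ y) = (Kᵀ *ᵥ y) ⬝ᵥ ((C * Cᵀ) *ᵥ (Kᵀ *ᵥ y)) := by
      have e1 : (K * C)ᵀ *ᵥ y = Cᵀ *ᵥ (Kᵀ *ᵥ y) := by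
        rw [Matrix.transpose_mul, Matrix.mulVec_mulVec]
      rw [e1, mulVec_dot, Matrix.transpose_transpose, Matrix.mulVec_mulVec]
    have hb := mulVec_dot_self_le (K * C)ᵀ y
    rw [norm_transpose'] at hb
    rw [← hmu] at hr
    nlinarith
  -- Step 2b: lam * ‖K * C‖^2 ≤ ‖M‖
  have h2b : lam * ‖K * C‖ ^ 2 ≤ ‖M‖ := by
    refine opNorm_sq_le (K * C) hl (norm_nonneg M) (fun v => ?_)
    have hr := rayleigh_low hR2.1 ((K * C) *ᵥ v)
    rw [← hlam] at hr
    have heq : ((K * C) *ᵥ v) ⬝ᵥ (R2 *ᵥ ((K * C) *ᵥ v)) = v ⬝ᵥ (M *ᵥ v) := by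
      rw [mulVec_dot (K * C) v (R2 *ᵥ ((K * C) *ᵥ v)), Matrix.mulVec_mulVec,
        Matrix.mulVec_mulVec, hMdef, Matrix.mul_assoc]
    have hq := quad_le_opNorm M v
    nlinarith
  have hKn : (0:ℝ) ≤ ‖K‖ := norm_nonneg _
  nlinarith [sq_nonneg ‖K * C‖]
end

section
/- Let C be a p×n real matrix with full row rank (so n ≥ p and C^T has full column rank), K an m×p matrix, and R2 an m×m symmetric positive definite matrix. Then ‖C^T K^T R2 K C‖₂ ≥ λ_min(R2) · σ_min(C)² · ‖K‖₂², where σ_min(C) > 0 is the smallest singular value of C. -/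
open Matrix
open scoped RealInnerProductSpace

namespace Stmt6Aux

/-- lift a plain vector to Euclidean space -/
noncomputable def toE {k : ℕ} (v : Fin k → ℝ) : EuclideanSpace ℝ (Fin k) :=
  (WithLp.equiv 2 (Fin k → ℝ)).symm v

lemma inner_toE {k : ℕ} (v w : Fin k → ℝ) : ⟪toE v, toE w⟫ = v ⬝ᵥ w := by
  simp [toE, PiLp.inner_apply, dotProduct]
  exact Finset.sum_congr rfl (fun i _ => mul_comm _ _)

lemma norm_toE_sq {k : ℕ} (v : Fin k → ℝ) : ‖toE v‖ ^ 2 = v ⬝ᵥ v := by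
  rw [← inner_toE v v, real_inner_self_eq_norm_sq]

lemma dot_self_nonneg {k : ℕ} (v : Fin k → ℝ) : 0 ≤ v ⬝ᵥ v := by
  rw [← norm_toE_sq]; positivity

lemma quad_lb {k : ℕ} {A : Matrix (Fin k) (Fin k) ℝ} (hA : A.IsHermitian) {c : ℝ}
    (hc : ∀ i, c ≤ hA.eigenvalues i) (x : Fin k → ℝ) :
    c * (x ⬝ᵥ x) ≤ x ⬝ᵥ (A *ᵥ x) := by
  have hps : (A - c • 1).PosSemidef := by
    have hfact : A - c • (1 : Matrix (Fin k) (Fin k) ℝ) =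
        (hA.eigenvectorUnitary : Matrix (Fin k) (Fin k) ℝ) *
          diagonal (fun i => hA.eigenvalues i - c) *
          (hA.eigenvectorUnitary : Matrix (Fin k) (Fin k) ℝ)ᴴ := by
      have hU : (hA.eigenvectorUnitary : Matrix (Fin k) (Fin k) ℝ) *
          (hA.eigenvectorUnitary : Matrix (Fin k) (Fin k) ℝ)ᴴ = 1 := by
        simpa [star_eq_conjTranspose] using
          (Matrix.mem_unitaryGroup_iff.mp hA.eigenvectorUnitary.2)
      have hU' : (hA.eigenvectorUnitary : Matrix (Fin k) (Fin k) ℝ) *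
          (hA.eigenvectorUnitary : Matrix (Fin k) (Fin k) ℝ)ᵀ = 1 := hU
      have hdiag : diagonal (fun i => hA.eigenvalues i - c) =
          diagonal (RCLike.ofReal ∘ hA.eigenvalues) - c • 1 := by
        simp [← diagonal_sub, ← Matrix.diagonal_smul, Matrix.smul_one_eq_diagonal]
      conv_lhs => rw [hA.spectral_theorem]
      rw [hdiag, Matrix.mul_sub, Matrix.sub_mul]
      simp [star_eq_conjTranspose, hU, hU', Matrix.mul_smul, Matrix.smul_mul, mul_one]
    rw [hfact]
    exact (Matrix.PosSemidef.diagonal (fun i => sub_nonneg.2 (hc i))).mul_mul_conjTranspose_same _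
  have h := hps.dotProduct_mulVec_nonneg x
  simp only [star_trivial, Matrix.sub_mulVec, Matrix.smul_mulVec, Matrix.one_mulVec,
    dotProduct_sub, dotProduct_smul, smul_eq_mul] at h
  linarith

lemma dot_mulVec_le {k : ℕ} (A : Matrix (Fin k) (Fin k) ℝ) (v : Fin k → ℝ) :
    v ⬝ᵥ (A *ᵥ v) ≤ l2opNorm A * (v ⬝ᵥ v) := by
  have h2 : toE (A *ᵥ v) = (LinearMap.toContinuousLinearMap (Matrix.toEuclideanLin A)) (toE v) :=
    rfl
  calc v ⬝ᵥ (A *ᵥ v) = ⟪toE v, toE (A *ᵥ v)⟫ := (inner_toE _ _).symm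
    _ ≤ ‖toE v‖ * ‖toE (A *ᵥ v)‖ := real_inner_le_norm _ _
    _ ≤ ‖toE v‖ * (l2opNorm A * ‖toE v‖) := by
        refine mul_le_mul_of_nonneg_left ?_ (norm_nonneg _)
        rw [h2]; exact ContinuousLinearMap.le_opNorm _ _
    _ = l2opNorm A * ‖toE v‖ ^ 2 := by ring
    _ = l2opNorm A * (v ⬝ᵥ v) := by rw [norm_toE_sq]

end Stmt6Aux

open Stmt6Aux

theorem stmt_6 {n m p : ℕ}
    (C : Matrix (Fin p) (Fin n) ℝ) (K : Matrix (Fin m) (Fin p) ℝ)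
    (R2 : Matrix (Fin m) (Fin m) ℝ)
    (hC : C.rank = p) (hR2 : R2.PosDef)
    (hCC : (C * Cᵀ).IsHermitian) :
    (⨅ i, hR2.1.eigenvalues i) * Real.sqrt (⨅ i, hCC.eigenvalues i) ^ 2 * l2opNorm K ^ 2 ≤
      l2opNorm (Cᵀ * Kᵀ * R2 * K * C) := by
  classical
  have hnn : 0 ≤ l2opNorm (Cᵀ * Kᵀ * R2 * K * C) := norm_nonneg _
  rcases Nat.eq_zero_or_pos p with hp | hp
  · subst hp
    have h0 : (⨅ i, hCC.eigenvalues i) = 0 := Real.iInf_of_isEmpty _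
    rw [h0, Real.sqrt_zero]
    simpa using hnn
  rcases Nat.eq_zero_or_pos m with hm | hm
  · subst hm
    have h0 : (⨅ i, hR2.1.eigenvalues i) = 0 := Real.iInf_of_isEmpty _
    rw [h0]
    simpa using hnn
  haveI : Nonempty (Fin p) := ⟨⟨0, hp⟩⟩
  haveI : Nonempty (Fin m) := ⟨⟨0, hm⟩⟩
  set M : Matrix (Fin n) (Fin n) ℝ := Cᵀ * Kᵀ * R2 * K * C with hMdef
  set nM : ℝ := l2opNorm M with hnM
  set lR : ℝ := ⨅ i, hR2.1.eigenvalues i with hlR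
  set lC : ℝ := ⨅ i, hCC.eigenvalues i with hlC
  have hlR_le : ∀ i, lR ≤ hR2.1.eigenvalues i := fun i =>
    ciInf_le (Set.Finite.bddBelow (Set.finite_range _)) i
  have hlC_le : ∀ i, lC ≤ hCC.eigenvalues i := fun i =>
    ciInf_le (Set.Finite.bddBelow (Set.finite_range _)) i
  -- positivity of lR
  have hlR_pos : 0 < lR := by
    obtain ⟨i0, hi0⟩ := Finite.exists_min (fun i => hR2.1.eigenvalues i)
    exact lt_of_lt_of_le (hR2.eigenvalues_pos i0) (le_ciInf hi0)
  -- C * Cᵀ is positive definite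
  have hinj : Function.Injective (Cᵀ.mulVecLin) := by
    rw [← LinearMap.ker_eq_bot]
    have hrank : Cᵀ.rank = p := by rw [Matrix.rank_transpose, hC]
    have hfr : Module.finrank ℝ (LinearMap.range Cᵀ.mulVecLin) = p := hrank
    have hsum := LinearMap.finrank_range_add_finrank_ker (Cᵀ.mulVecLin)
    rw [hfr] at hsum
    simp only [Module.finrank_pi, Fintype.card_fin] at hsum
    have : Module.finrank ℝ (LinearMap.ker Cᵀ.mulVecLin) = 0 := by omega
    exact Submodule.finrank_eq_zero.mp this
  have hB : (C * Cᵀ).PosDef := by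
    refine Matrix.PosDef.of_dotProduct_mulVec_pos hCC (fun x hx => ?_)
    have hx' : Cᵀ *ᵥ x ≠ 0 := by
      intro h
      apply hx
      apply hinj
      rw [map_zero, Matrix.mulVecLin_apply, h]
    have heq : star x ⬝ᵥ ((C * Cᵀ) *ᵥ x) = (Cᵀ *ᵥ x) ⬝ᵥ (Cᵀ *ᵥ x) := by
      rw [star_trivial, ← Matrix.mulVec_mulVec, Matrix.dotProduct_mulVec,
        ← Matrix.mulVec_transpose]
    rw [heq]
    rcases (dot_self_nonneg (Cᵀ *ᵥ x)).lt_or_eq with h | h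
    · exact h
    · exfalso
      apply hx'
      have : ‖toE (Cᵀ *ᵥ x)‖ ^ 2 = 0 := by rw [norm_toE_sq, ← h]
      have h0 : toE (Cᵀ *ᵥ x) = 0 := by
        rw [pow_eq_zero_iff (by norm_num), norm_eq_zero] at this
        exact this
      simpa [toE] using congrArg (WithLp.equiv 2 (Fin n → ℝ)) h0
  have hlC_pos : 0 < lC := by
    obtain ⟨i0, hi0⟩ := Finite.exists_min (fun i => hCC.eigenvalues i)
    exact lt_of_lt_of_le (hB.eigenvalues_pos i0) (le_ciInf hi0)
  -- key inequality
  have key : ∀ u : Fin p → ℝ,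
      lR * lC * ((K *ᵥ u) ⬝ᵥ (K *ᵥ u)) ≤ nM * (u ⬝ᵥ u) := by
    intro u
    have hdet : IsUnit (C * Cᵀ).det := (Matrix.isUnit_iff_isUnit_det _).mp hB.isUnit
    set w : Fin p → ℝ := (C * Cᵀ)⁻¹ *ᵥ u with hw
    set v : Fin n → ℝ := Cᵀ *ᵥ w with hv
    have hBw : (C * Cᵀ) *ᵥ w = u := by
      rw [hw, Matrix.mulVec_mulVec, Matrix.mul_nonsing_inv _ hdet, Matrix.one_mulVec]
    have hCv : C *ᵥ v = u := by rw [hv, Matrix.mulVec_mulVec]; exact hBw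
    have hvv : v ⬝ᵥ v = u ⬝ᵥ w := by
      rw [hv, Matrix.dotProduct_mulVec, Matrix.vecMul_transpose, ← hv, hCv]
    have hq2 : (K *ᵥ u) ⬝ᵥ (R2 *ᵥ (K *ᵥ u)) = v ⬝ᵥ (M *ᵥ v) := by
      rw [hMdef]
      simp only [← Matrix.mulVec_mulVec]
      rw [hCv, Matrix.dotProduct_mulVec v Cᵀ, Matrix.vecMul_transpose, hCv,
        Matrix.dotProduct_mulVec u Kᵀ, Matrix.vecMul_transpose]
    have h1 : lR * ((K *ᵥ u) ⬝ᵥ (K *ᵥ u)) ≤ v ⬝ᵥ (M *ᵥ v) := by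
      rw [← hq2]; exact quad_lb hR2.1 hlR_le _
    have h2 : v ⬝ᵥ (M *ᵥ v) ≤ nM * (u ⬝ᵥ w) := by
      rw [← hvv]; exact dot_mulVec_le M v
    have h3 : lC * (u ⬝ᵥ w) ≤ u ⬝ᵥ u := by
      have hwB : lC * (w ⬝ᵥ w) ≤ w ⬝ᵥ u := by
        have := quad_lb hCC hlC_le w
        rwa [hBw] at this
      have cs : (w ⬝ᵥ u) * (w ⬝ᵥ u) ≤ (w ⬝ᵥ w) * (u ⬝ᵥ u) := by
        rw [← inner_toE w u, ← inner_toE w w, ← inner_toE u u]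
        exact real_inner_mul_inner_self_le _ _
      have hww : 0 ≤ w ⬝ᵥ w := dot_self_nonneg w
      have huu : 0 ≤ u ⬝ᵥ u := dot_self_nonneg u
      rw [dotProduct_comm u w]
      have hwu_nn : 0 ≤ w ⬝ᵥ u := le_trans (mul_nonneg hlC_pos.le hww) hwB
      rcases hww.lt_or_eq with hw0 | hw0
      · nlinarith [mul_le_mul_of_nonneg_right hwB hwu_nn, cs, hw0]
      · have hwu0 : w ⬝ᵥ u = 0 := by nlinarith [cs]
        rw [hwu0, mul_zero]
        exact huu
    have hnM0 : 0 ≤ nM := norm_nonneg _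
    calc lR * lC * ((K *ᵥ u) ⬝ᵥ (K *ᵥ u)) = lC * (lR * ((K *ᵥ u) ⬝ᵥ (K *ᵥ u))) := by ring
      _ ≤ lC * (v ⬝ᵥ (M *ᵥ v)) := mul_le_mul_of_nonneg_left h1 hlC_pos.le
      _ ≤ lC * (nM * (u ⬝ᵥ w)) := mul_le_mul_of_nonneg_left h2 hlC_pos.le
      _ = nM * (lC * (u ⬝ᵥ w)) := by ring
      _ ≤ nM * (u ⬝ᵥ u) := mul_le_mul_of_nonneg_left h3 hnM0
  -- deduce the operator norm bound on K
  have hqnn : 0 ≤ nM / (lR * lC) := div_nonneg (norm_nonneg _) (by positivity)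
  have hKb : l2opNorm K ≤ Real.sqrt (nM / (lR * lC)) := by
    apply ContinuousLinearMap.opNorm_le_bound _ (Real.sqrt_nonneg _)
    intro x
    set u : Fin p → ℝ := WithLp.equiv 2 (Fin p → ℝ) x with hu
    have hx : toE u = x := by simp [toE, hu]
    have hKx : (LinearMap.toContinuousLinearMap (Matrix.toEuclideanLin K)) x = toE (K *ᵥ u) := by
      rw [← hx]; rfl
    rw [hKx]
    have hsq : ‖toE (K *ᵥ u)‖ ^ 2 ≤ (nM / (lR * lC)) * ‖x‖ ^ 2 := by
      rw [norm_toE_sq, ← hx, norm_toE_sq]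
      have hk := key u
      rw [div_mul_eq_mul_div, le_div_iff₀ (by positivity)]
      calc (K *ᵥ u) ⬝ᵥ (K *ᵥ u) * (lR * lC) = lR * lC * ((K *ᵥ u) ⬝ᵥ (K *ᵥ u)) := by ring
        _ ≤ nM * (u ⬝ᵥ u) := hk
    calc ‖toE (K *ᵥ u)‖ = Real.sqrt (‖toE (K *ᵥ u)‖ ^ 2) := (Real.sqrt_sq (norm_nonneg _)).symm
      _ ≤ Real.sqrt ((nM / (lR * lC)) * ‖x‖ ^ 2) := Real.sqrt_le_sqrt hsq
      _ = Real.sqrt (nM / (lR * lC)) * ‖x‖ := by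
          rw [Real.sqrt_mul hqnn, Real.sqrt_sq (norm_nonneg _)]
  have hK2 : l2opNorm K ^ 2 ≤ nM / (lR * lC) := by
    have := pow_le_pow_left₀ (norm_nonneg _) hKb 2
    rwa [Real.sq_sqrt hqnn] at this
  rw [Real.sq_sqrt hlC_pos.le]
  have := (le_div_iff₀ (by positivity : (0:ℝ) < lR * lC)).mp hK2
  calc lR * lC * l2opNorm K ^ 2 = l2opNorm K ^ 2 * (lR * lC) := by ring
    _ ≤ nM := this
end

section
/- Let A, B be real matrices of sizes n×n and n×m, C a p×n matrix, and K a sequence K_j ∈ ℝ^{m×p} with ‖K_j‖₂ → ∞, all K_j stabilizing (A - B K_j C Hurwitz). Suppose the associated Lyapunov solutions P_j satisfy (A - B K_j C)^T P_j + P_j (A - B K_j C) + R̂(K_j) = 0 with R̂ as before, C of full row rank, and R2 positive definite. Then ‖P_j‖₂ → ∞. -/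
open Matrix Filter

open scoped Matrix.Norms.L2Operator

namespace Stmt15Aux

noncomputable def ee {a : ℕ} (v : Fin a → ℝ) : EuclideanSpace ℝ (Fin a) :=
  (WithLp.equiv 2 (Fin a → ℝ)).symm v

lemma l2opNorm_eq {a b : ℕ} (M : Matrix (Fin a) (Fin b) ℝ) : l2opNorm M = ‖M‖ := rfl

lemma dot_eq_inner {a : ℕ} (x y : Fin a → ℝ) :
    x ⬝ᵥ y = (inner ℝ (ee x) (ee y) : ℝ) := by
  simp [ee, PiLp.inner_apply, dotProduct, RCLike.inner_apply, mul_comm]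

lemma abs_dot_le {a : ℕ} (x y : Fin a → ℝ) : |x ⬝ᵥ y| ≤ ‖ee x‖ * ‖ee y‖ := by
  rw [dot_eq_inner]; exact abs_real_inner_le_norm _ _

lemma norm_ee_mulVec_le {a b : ℕ} (M : Matrix (Fin a) (Fin b) ℝ) (x : Fin b → ℝ) :
    ‖ee (M *ᵥ x)‖ ≤ ‖M‖ * ‖ee x‖ :=
  M.l2_opNorm_mulVec (ee x)

lemma norm_transpose {a b : ℕ} (M : Matrix (Fin a) (Fin b) ℝ) : ‖Mᵀ‖ = ‖M‖ := by
  rw [← M.conjTranspose_eq_transpose_of_trivial, M.l2_opNorm_conjTranspose]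

/-- Positive definiteness gives a uniform quadratic lower bound. -/
lemma posdef_bound {k : ℕ} {R : Matrix (Fin k) (Fin k) ℝ} (hR : R.PosDef) :
    ∃ ε > 0, ∀ x : Fin k → ℝ, ε * ‖ee x‖ ^ 2 ≤ x ⬝ᵥ (R *ᵥ x) := by
  rcases Nat.eq_zero_or_pos k with hk | hk
  · refine ⟨1, one_pos, fun x => ?_⟩
    subst hk
    have hx2 : ee x = 0 := Subsingleton.elim _ _
    have hx : x = 0 := Subsingleton.elim _ _
    rw [hx2, hx]
    simp
  · -- the continuous quadratic form attains a positive minimum on the sphere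
    have hcont : Continuous fun y : EuclideanSpace ℝ (Fin k) =>
        (WithLp.equiv 2 (Fin k → ℝ)) y ⬝ᵥ (R *ᵥ (WithLp.equiv 2 (Fin k → ℝ)) y) := by
      have h1 : Continuous fun y : EuclideanSpace ℝ (Fin k) =>
          (WithLp.equiv 2 (Fin k → ℝ)) y := PiLp.continuous_ofLp ..
      exact h1.dotProduct (continuous_const.matrix_mulVec h1)
    have hne : (Metric.sphere (0 : EuclideanSpace ℝ (Fin k)) 1).Nonempty := by
      refine ⟨EuclideanSpace.single ⟨0, hk⟩ (1 : ℝ), ?_⟩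
      simp [EuclideanSpace.norm_single]
    obtain ⟨v, hv, hvmin'⟩ :=
      (isCompact_sphere (0 : EuclideanSpace ℝ (Fin k)) 1).exists_isMinOn hne hcont.continuousOn
    have hvmin := isMinOn_iff.mp hvmin'
    have hv1 : ‖v‖ = 1 := by simpa using hv
    set vv : Fin k → ℝ := (WithLp.equiv 2 (Fin k → ℝ)) v with hvv
    have hvne : vv ≠ 0 := by
      intro h
      have : v = 0 := by
        apply (WithLp.equiv 2 (Fin k → ℝ)).injective
        simpa [hvv] using h
      rw [this] at hv1; simp at hv1
    have hεpos : 0 < vv ⬝ᵥ (R *ᵥ vv) := by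
      have := hR.dotProduct_mulVec_pos hvne
      simpa using this
    refine ⟨vv ⬝ᵥ (R *ᵥ vv), hεpos, fun x => ?_⟩
    by_cases hx : x = 0
    · simp [hx, ee]
    have hxe : ee x ≠ 0 := by
      intro h
      exact hx (by simpa [ee] using congrArg (WithLp.equiv 2 (Fin k → ℝ)) h)
    have hnx : (0 : ℝ) < ‖ee x‖ := norm_pos_iff.mpr hxe
    set c : ℝ := ‖ee x‖⁻¹ with hc
    have hw : (c • ee x) ∈ Metric.sphere (0 : EuclideanSpace ℝ (Fin k)) 1 := by
      simp [norm_smul, hc, abs_of_pos (inv_pos.mpr hnx), inv_mul_cancel₀ hnx.ne']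
    have hmin := hvmin _ hw
    have hsmul : (WithLp.equiv 2 (Fin k → ℝ)) (c • ee x) = c • x := by
      rfl
    rw [hsmul] at hmin
    have hquad : (c • x) ⬝ᵥ (R *ᵥ (c • x)) = c ^ 2 * (x ⬝ᵥ (R *ᵥ x)) := by
      rw [Matrix.mulVec_smul, dotProduct_smul, smul_dotProduct]
      ring_nf
    rw [hquad] at hmin
    have hc2 : c ^ 2 = (‖ee x‖ ^ 2)⁻¹ := by
      rw [hc]; rw [← inv_pow]
    -- from hmin : ε ≤ (‖x‖²)⁻¹ * (x R x)
    have h2 : vv ⬝ᵥ (R *ᵥ vv) * ‖ee x‖ ^ 2 ≤ x ⬝ᵥ (R *ᵥ x) := by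
      rw [hc2] at hmin
      have hpos2 : (0 : ℝ) < ‖ee x‖ ^ 2 := by positivity
      calc vv ⬝ᵥ (R *ᵥ vv) * ‖ee x‖ ^ 2
          ≤ ((‖ee x‖ ^ 2)⁻¹ * (x ⬝ᵥ (R *ᵥ x))) * ‖ee x‖ ^ 2 :=
            mul_le_mul_of_nonneg_right hmin hpos2.le
        _ = x ⬝ᵥ (R *ᵥ x) := by field_simp
    exact h2

set_option maxHeartbeats 2000000 in
/-- The key quadratic inequality extracted from the Lyapunov equation. -/
lemma key {n m : ℕ} (A : Matrix (Fin n) (Fin n) ℝ) (B : Matrix (Fin n) (Fin m) ℝ)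
    (R1 : Matrix (Fin n) (Fin n) ℝ) (R12 : Matrix (Fin n) (Fin m) ℝ)
    (R2 : Matrix (Fin m) (Fin m) ℝ) (Kc : Matrix (Fin m) (Fin n) ℝ)
    (Pj : Matrix (Fin n) (Fin n) ℝ) {ε : ℝ} (hε : 0 < ε)
    (hR2ε : ∀ x : Fin m → ℝ, ε * ‖ee x‖ ^ 2 ≤ x ⬝ᵥ (R2 *ᵥ x))
    (hKc : 1 ≤ ‖Kc‖)
    (hL : (A - B * Kc)ᵀ * Pj + Pj * (A - B * Kc) +
      (R1 - R12 * Kc - (R12 * Kc)ᵀ + Kcᵀ * R2 * Kc) = 0) :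
    ε * (‖Kc‖ - 1) ^ 2 ≤ 2 * (‖A‖ + ‖B‖ * ‖Kc‖) * ‖Pj‖ + ‖R1‖ + 2 * ‖R12‖ * ‖Kc‖ := by
  classical
  set t := ‖Kc‖ with ht
  set f := LinearMap.toContinuousLinearMap (Matrix.toEuclideanLin Kc) with hf
  have hfnorm : ‖f‖ = t := by rw [ht, Matrix.l2_opNorm_def]; rfl
  have hlt : t - 1 < ‖f‖ := by rw [hfnorm]; linarith
  obtain ⟨x, hx1, hx2⟩ := f.exists_lt_apply_of_lt_opNorm hlt
  set xv : Fin n → ℝ := (WithLp.equiv 2 (Fin n → ℝ)) x with hxv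
  have hxee : ee xv = x := rfl
  have hfx : f x = ee (Kc *ᵥ xv) := rfl
  rw [hfx] at hx2
  -- quadratic form
  set q : Matrix (Fin n) (Fin n) ℝ → ℝ := fun M => xv ⬝ᵥ (M *ᵥ xv) with hq
  have hqbound : ∀ M : Matrix (Fin n) (Fin n) ℝ, |q M| ≤ ‖M‖ := by
    intro M
    have h1 : |q M| ≤ ‖ee xv‖ * ‖ee (M *ᵥ xv)‖ := abs_dot_le _ _
    have h2 : ‖ee (M *ᵥ xv)‖ ≤ ‖M‖ * ‖ee xv‖ := norm_ee_mulVec_le _ _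
    have hx1' : ‖ee xv‖ ≤ 1 := by rw [hxee]; exact hx1.le
    refine le_trans h1 ?_
    calc ‖ee xv‖ * ‖ee (M *ᵥ xv)‖
        ≤ 1 * (‖M‖ * 1) := by
          apply mul_le_mul hx1' (h2.trans ?_) (norm_nonneg _) zero_le_one
          exact mul_le_mul_of_nonneg_left hx1' (norm_nonneg M)
      _ = ‖M‖ := by ring
  set Acl := A - B * Kc with hAcl
  have hRhat : R1 - R12 * Kc - (R12 * Kc)ᵀ + Kcᵀ * R2 * Kc
      = -(Aclᵀ * Pj + Pj * Acl) := by
    have hL' := hL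
    rw [add_comm (Aclᵀ * Pj + Pj * Acl)] at hL'
    exact eq_neg_of_add_eq_zero_left hL'
  -- expand q on the Lyapunov identity
  have hqadd : ∀ M N : Matrix (Fin n) (Fin n) ℝ, q (M + N) = q M + q N := by
    intro M N; simp [hq, Matrix.add_mulVec, dotProduct_add]
  have hqsub : ∀ M N : Matrix (Fin n) (Fin n) ℝ, q (M - N) = q M - q N := by
    intro M N; simp [hq, Matrix.sub_mulVec, dotProduct_sub]
  have hqneg : ∀ M : Matrix (Fin n) (Fin n) ℝ, q (-M) = - q M := by
    intro M; simp [hq, Matrix.neg_mulVec, dotProduct_neg]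
  have hmain : q (Kcᵀ * R2 * Kc) =
      -(q (Aclᵀ * Pj) + q (Pj * Acl)) - q R1 + q (R12 * Kc) + q ((R12 * Kc)ᵀ) := by
    have := congrArg q hRhat
    rw [hqadd _ (Kcᵀ * R2 * Kc), hqsub, hqsub, hqneg, hqadd] at this
    linarith
  -- lower bound for the R2 term
  have hlow : ε * (t - 1) ^ 2 ≤ q (Kcᵀ * R2 * Kc) := by
    have hrw : q (Kcᵀ * R2 * Kc) = (Kc *ᵥ xv) ⬝ᵥ (R2 *ᵥ (Kc *ᵥ xv)) := by
      rw [hq]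
      simp only [← Matrix.mulVec_mulVec]
      rw [Matrix.dotProduct_mulVec, Matrix.vecMul_transpose]
    rw [hrw]
    refine le_trans ?_ (hR2ε (Kc *ᵥ xv))
    have h0 : (0 : ℝ) ≤ t - 1 := by linarith
    have hsq : (t - 1) ^ 2 ≤ ‖ee (Kc *ᵥ xv)‖ ^ 2 := by
      have := pow_le_pow_left₀ h0 hx2.le 2
      exact this
    exact mul_le_mul_of_nonneg_left hsq hε.le
  -- upper bounds
  have hP1 : |q (Aclᵀ * Pj)| ≤ ‖Acl‖ * ‖Pj‖ := by
    refine le_trans (hqbound _) ?_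
    calc ‖Aclᵀ * Pj‖ ≤ ‖Aclᵀ‖ * ‖Pj‖ := Matrix.l2_opNorm_mul _ _
      _ = ‖Acl‖ * ‖Pj‖ := by rw [norm_transpose]
  have hP2 : |q (Pj * Acl)| ≤ ‖Pj‖ * ‖Acl‖ :=
    le_trans (hqbound _) (Matrix.l2_opNorm_mul _ _)
  have hR1b : |q R1| ≤ ‖R1‖ := hqbound _
  have hR12a : |q (R12 * Kc)| ≤ ‖R12‖ * t :=
    le_trans (hqbound _) (Matrix.l2_opNorm_mul _ _)
  have hR12b : |q ((R12 * Kc)ᵀ)| ≤ ‖R12‖ * t := by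
    refine le_trans (hqbound _) ?_
    rw [norm_transpose]
    exact Matrix.l2_opNorm_mul _ _
  have hAclb : ‖Acl‖ ≤ ‖A‖ + ‖B‖ * t := by
    refine le_trans (norm_sub_le _ _) ?_
    exact add_le_add le_rfl (Matrix.l2_opNorm_mul _ _)
  have hPn : (0 : ℝ) ≤ ‖Pj‖ := norm_nonneg _
  have hAcln : (0 : ℝ) ≤ ‖Acl‖ := norm_nonneg _
  have habs1 := abs_le.mp hP1
  have habs2 := abs_le.mp hP2
  have habs3 := abs_le.mp hR1b
  have habs4 := abs_le.mp hR12a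
  have habs5 := abs_le.mp hR12b
  have hprod : ‖Acl‖ * ‖Pj‖ ≤ (‖A‖ + ‖B‖ * t) * ‖Pj‖ :=
    mul_le_mul_of_nonneg_right hAclb hPn
  nlinarith [hlow, hmain]

end Stmt15Aux

set_option maxHeartbeats 2000000 in
open Stmt15Aux in
theorem stmt_15 {n m p : ℕ}
    (A : Matrix (Fin n) (Fin n) ℝ) (B : Matrix (Fin n) (Fin m) ℝ)
    (C : Matrix (Fin p) (Fin n) ℝ)
    (R1 : Matrix (Fin n) (Fin n) ℝ) (R12 : Matrix (Fin n) (Fin m) ℝ)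
    (R2 : Matrix (Fin m) (Fin m) ℝ)
    (hC : C.rank = p) (hR2 : R2.PosDef)
    (K : ℕ → Matrix (Fin m) (Fin p) ℝ) (P : ℕ → Matrix (Fin n) (Fin n) ℝ)
    (hKnorm : Tendsto (fun j => l2opNorm (K j)) atTop atTop)
    (hstab : ∀ j, ∀ z ∈ spectrum ℂ ((A - B * K j * C).map Complex.ofReal), z.re < 0)
    (hLyap : ∀ j, (A - B * K j * C)ᵀ * P j + P j * (A - B * K j * C) +
      (R1 - R12 * K j * C - (R12 * K j * C)ᵀ + (K j * C)ᵀ * R2 * (K j * C)) = 0) :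
    Tendsto (fun j => l2opNorm (P j)) atTop atTop := by
  classical
  obtain ⟨ε, hε, hR2ε⟩ := posdef_bound hR2
  -- right inverse of C
  obtain ⟨D, hD⟩ : ∃ D : Matrix (Fin n) (Fin p) ℝ, C * D = 1 := by
    have h1 : (C * Cᵀ).rank = p := by rw [Matrix.rank_self_mul_transpose, hC]
    have hsurj : Function.Surjective (C * Cᵀ).mulVec := by
      have hrange : LinearMap.range (C * Cᵀ).mulVecLin = ⊤ := by
        apply Submodule.eq_top_of_finrank_eq
        rw [← Matrix.rank, h1]
        simp
      intro v
      obtain ⟨w, hw⟩ := (LinearMap.range_eq_top.mp hrange) v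
      exact ⟨w, hw⟩
    have hu : IsUnit (C * Cᵀ) := Matrix.mulVec_surjective_iff_isUnit.mp hsurj
    refine ⟨Cᵀ * (C * Cᵀ)⁻¹, ?_⟩
    rw [← Matrix.mul_assoc]
    exact Matrix.mul_nonsing_inv _ ((Matrix.isUnit_iff_isUnit_det _).mp hu)
  have hKfac : ∀ j, K j = (K j * C) * D := fun j => by
    rw [Matrix.mul_assoc, hD, Matrix.mul_one]
  have hKn : ∀ j, l2opNorm (K j) = ‖K j‖ := fun _ => rfl
  have hPn : ∀ j, l2opNorm (P j) = ‖P j‖ := fun _ => rfl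
  simp only [hKn] at hKnorm
  simp only [hPn]
  -- D ≠ 0
  have hDpos : 0 < ‖D‖ := by
    rcases (norm_nonneg D).lt_or_eq with h | h
    · exact h
    · exfalso
      have hD0 : D = 0 := by
        rw [← norm_eq_zero]; exact h.symm
      have hK0 : ∀ j, ‖K j‖ = 0 := fun j => by
        rw [hKfac j, hD0, Matrix.mul_zero, norm_zero]
      have := (tendsto_atTop.mp hKnorm 1).exists
      obtain ⟨j, hj⟩ := this
      rw [hK0 j] at hj; linarith
  -- ‖K j * C‖ → ∞
  have hKCle : ∀ j, ‖K j‖ / ‖D‖ ≤ ‖K j * C‖ := by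
    intro j
    rw [div_le_iff₀ hDpos]
    calc ‖K j‖ = ‖(K j * C) * D‖ := by rw [← hKfac j]
      _ ≤ ‖K j * C‖ * ‖D‖ := Matrix.l2_opNorm_mul _ _
  have hKC : Tendsto (fun j => ‖K j * C‖) atTop atTop :=
    tendsto_atTop_mono hKCle (hKnorm.atTop_div_const hDpos)
  rw [tendsto_atTop]
  intro M0
  set M := max M0 0 with hM
  have hM0 : 0 ≤ M := le_max_right _ _
  have han : 0 ≤ ‖A‖ := norm_nonneg _
  have hbn : 0 ≤ ‖B‖ := norm_nonneg _
  have hr1n : 0 ≤ ‖R1‖ := norm_nonneg _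
  have hr12n : 0 ≤ ‖R12‖ := norm_nonneg _
  set α : ℝ := ‖R1‖ + 2 * ‖R12‖ + M * (2 * ‖A‖ + 2 * ‖B‖ + 1) with hα
  set β : ℝ := 2 * ‖R12‖ + 2 * M * ‖B‖ with hβ
  have hαn : 0 ≤ α := by positivity
  have hβn : 0 ≤ β := by positivity
  filter_upwards [hKC.eventually_ge_atTop (max 2 ((α + β) / ε + 2))] with j hj
  have ht2 : 2 ≤ ‖K j * C‖ := le_trans (le_max_left _ _) hj
  have htd : (α + β) / ε + 2 ≤ ‖K j * C‖ := le_trans (le_max_right _ _) hj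
  have hs1 : 1 ≤ ‖K j * C‖ - 1 := by linarith
  have hs0 : (0 : ℝ) ≤ ‖K j * C‖ - 1 := by linarith
  have hsd : (α + β) / ε ≤ ‖K j * C‖ - 1 := by linarith
  have hεs : α + β ≤ ε * (‖K j * C‖ - 1) := by
    rw [div_le_iff₀ hε] at hsd; linarith
  have hkey := key A B R1 R12 R2 (K j * C) (P j) hε hR2ε (by linarith)
    (by have := hLyap j; rw [Matrix.mul_assoc B (K j) C, Matrix.mul_assoc R12 (K j) C] at this; exact this)
  have hPnn : (0 : ℝ) ≤ ‖P j‖ := norm_nonneg _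
  have h1 : α + β * (‖K j * C‖ - 1) ≤ ε * (‖K j * C‖ - 1) ^ 2 := by
    have hmm := mul_le_mul_of_nonneg_right hεs hs0
    have haa := mul_nonneg hαn (by linarith : (0:ℝ) ≤ ‖K j * C‖ - 1 - 1)
    nlinarith
  have h2 : α + β * (‖K j * C‖ - 1)
      = ‖R1‖ + 2 * ‖R12‖ * ‖K j * C‖ + M * (2 * ‖A‖ + 2 * ‖B‖ * ‖K j * C‖ + 1) := by
    rw [hα, hβ]; ring
  have hstep : M * (2 * ‖A‖ + 2 * ‖B‖ * ‖K j * C‖ + 1)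
      ≤ (2 * ‖A‖ + 2 * ‖B‖ * ‖K j * C‖ + 1) * ‖P j‖ := by
    have h3 : 2 * (‖A‖ + ‖B‖ * ‖K j * C‖) * ‖P j‖
        ≤ (2 * ‖A‖ + 2 * ‖B‖ * ‖K j * C‖ + 1) * ‖P j‖ := by nlinarith
    linarith
  have hden : (0 : ℝ) < 2 * ‖A‖ + 2 * ‖B‖ * ‖K j * C‖ + 1 := by nlinarith
  have hfin : M ≤ ‖P j‖ := by
    rw [mul_comm] at hstep
    exact le_of_mul_le_mul_left hstep hden
  exact le_trans (le_max_left _ _) hfin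
end
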